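/- arXiv:1109.0274 — 2 statements merged into one kernel-verified Lean document; each statement's English description precedes it below -/
import Mathlib

section
/- The function g(θ) = θ/2 - 1/2 + (θ/2)√(1 - 2/θ) + log(1/2 - (1/2)√(1 - 2/θ)) is strictly increasing on the interval [2, ∞). -/
noncomputable def g (θ : ℝ) : ℝ :=
  θ / 2 - 1 / 2 + θ / 2 * Real.sqrt (1 - 2 / θ) +
    Real.log (1 / 2 - 1 / 2 * Real.sqrt (1 - 2 / θ))

/-! With `t = 1 - √(1 - 2/θ)` one has `θ (1 + √(1 - 2/θ)) / 2 = 1/t`, so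
`g θ = 1/t + log t - 1/2 - log 2`. As `θ` runs through `[2, ∞)`, `t` decreases strictly
through `(0, 1]`, and `t ↦ 1/t + log t` is strictly decreasing on `(0, 1]`. -/

open Real Set

lemma inv_add_log_strictAntiOn : StrictAntiOn (fun t : ℝ => t⁻¹ + log t) (Ioc 0 1) := by
  rintro t ⟨ht, -⟩ u ⟨hu, hu1⟩ htu
  -- `log (u/t) < u/t - 1 = (u - t)/t ≤ (u - t)/(t u) = 1/t - 1/u`
  have hlog : log u - log t < u / t - 1 := by
    rw [← log_div hu.ne' ht.ne']
    exact log_lt_sub_one_of_pos (by positivity) (div_ne_one_of_ne htu.ne')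
  have hinv : u / t - 1 ≤ t⁻¹ - u⁻¹ := by
    rw [div_sub_one ht.ne', inv_sub_inv ht.ne' hu.ne', ← div_div]
    exact le_div_self (div_nonneg (sub_nonneg.mpr htu.le) ht.le) hu hu1
  show u⁻¹ + log u < t⁻¹ + log t
  linarith

lemma one_sub_sqrt_one_sub_two_div_mem_Ioc {θ : ℝ} (hθ : 0 < θ) :
    1 - √(1 - 2 / θ) ∈ Ioc 0 1 := by
  refine ⟨sub_pos.mpr ?_, sub_le_self _ (sqrt_nonneg _)⟩
  rw [sqrt_lt' one_pos]
  linarith [div_pos two_pos hθ]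

lemma sqrt_one_sub_two_div_strictMonoOn :
    StrictMonoOn (fun θ : ℝ => √(1 - 2 / θ)) (Ici 2) := by
  intro a ha b _ hab
  have ha0 : (0 : ℝ) < a := two_pos.trans_le ha
  apply sqrt_lt_sqrt
  · rw [sub_nonneg, div_le_one ha0]; exact ha
  · linarith [div_lt_div_of_pos_left two_pos ha0 hab]

lemma g_eq_inv_add_log {θ : ℝ} (hθ : 2 ≤ θ) :
    g θ = (1 - √(1 - 2 / θ))⁻¹ + log (1 - √(1 - 2 / θ)) - 1 / 2 - log 2 := by
  have hθ0 : 0 < θ := two_pos.trans_le hθ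
  set s := √(1 - 2 / θ) with hs
  have hs1 : 0 < 1 - s := (one_sub_sqrt_one_sub_two_div_mem_Ioc hθ0).1
  have hsq : s ^ 2 = 1 - 2 / θ := sq_sqrt (by rw [sub_nonneg, div_le_one hθ0]; exact hθ)
  have hrat : θ / 2 - 1 / 2 + θ / 2 * s = (1 - s)⁻¹ - 1 / 2 := by
    field_simp
    field_simp at hsq
    nlinarith
  have hlog : log (1 / 2 - 1 / 2 * s) = log (1 - s) - log 2 := by
    rw [← log_div hs1.ne' two_ne_zero]; ring_nf
  rw [g, ← hs, hrat, hlog]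
  ring

theorem g_strictMonoOn : StrictMonoOn g (Set.Ici (2 : ℝ)) := by
  intro a ha b hb hab
  have hta := one_sub_sqrt_one_sub_two_div_mem_Ioc (two_pos.trans_le ha)
  have htb := one_sub_sqrt_one_sub_two_div_mem_Ioc (two_pos.trans_le hb)
  have key := inv_add_log_strictAntiOn htb hta
    (sub_lt_sub_left (sqrt_one_sub_two_div_strictMonoOn ha hb hab) 1)
  rw [g_eq_inv_add_log ha, g_eq_inv_add_log hb]
  linarith
end

section
/- The function g(θ) = θ/2 - 1/2 + (θ/2)√(1 - 2/θ) + log(1/2 - (1/2)√(1 - 2/θ)) satisfies g(2) < 0 and g(3) > 0, and hence has a unique zero θ_c in [2, ∞). -/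
/-! With `u θ = 1 - √(1 - 2/θ)`, which decreases from `1` towards `0` on `[2, ∞)`, one has
`g θ = 1/u + log u - 1/2 - log 2`. As `x ↦ 1/x + log x` decreases on `(0, 1]`, `g` is strictly
increasing there. Moreover `g 2 = 1/2 - log 2 < 0`, and `u 3 < 1/2` gives
`g 3 > 3/2 - 2 log 2 > 0`; the intermediate value theorem produces the zero. -/

open Real Set

theorem strictAntiOn_inv_add_log : StrictAntiOn (fun x : ℝ => x⁻¹ + log x) (Ioc 0 1) := by
  rintro x ⟨hx, -⟩ y ⟨-, hy⟩ hxy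
  have hy0 : 0 < y := hx.trans hxy
  -- `log (y / x) < y / x - 1 = (y - x) / x ≤ (y - x) / (x * y) = x⁻¹ - y⁻¹`
  have hlog : log y - log x < y / x - 1 := by
    rw [← log_div hy0.ne' hx.ne']
    refine log_lt_sub_one_of_pos (by positivity) ?_
    rw [Ne, div_eq_one_iff_eq hx.ne']
    exact hxy.ne'
  have hbound : y / x - 1 ≤ x⁻¹ - y⁻¹ := by
    rw [div_sub_one hx.ne', inv_sub_inv hx.ne' hy0.ne', div_le_div_iff₀ hx (by positivity)]
    nlinarith [mul_nonneg (sub_nonneg.2 hxy.le) (mul_nonneg hx.le (sub_nonneg.2 hy))]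
  dsimp only
  linarith

noncomputable def oneSubSqrt (θ : ℝ) : ℝ := 1 - √(1 - 2 / θ)

lemma one_sub_two_div_mem_Ico {θ : ℝ} (hθ : 2 ≤ θ) : 1 - 2 / θ ∈ Ico 0 1 := by
  have hθ0 : 0 < θ := by linarith
  exact ⟨sub_nonneg.2 ((div_le_one hθ0).2 hθ), sub_lt_self 1 (by positivity)⟩

lemma oneSubSqrt_mem_Ioc {θ : ℝ} (hθ : 2 ≤ θ) : oneSubSqrt θ ∈ Ioc 0 1 := by
  obtain ⟨h0, h1⟩ := one_sub_two_div_mem_Ico hθ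
  exact ⟨sub_pos.2 ((sqrt_lt_sqrt h0 h1).trans_eq sqrt_one), sub_le_self 1 (sqrt_nonneg _)⟩

lemma strictAntiOn_oneSubSqrt : StrictAntiOn oneSubSqrt (Ici 2) := by
  intro a ha b hb hab
  have ha0 : (0 : ℝ) < a := by linarith [mem_Ici.1 ha]
  have hdiv : 2 / b < 2 / a := div_lt_div_of_pos_left two_pos ha0 hab
  unfold oneSubSqrt
  gcongr
  exact (one_sub_two_div_mem_Ico ha).1

lemma continuousOn_oneSubSqrt : ContinuousOn oneSubSqrt (Ici 2) := by
  have hne : ∀ θ ∈ Ici (2 : ℝ), θ ≠ 0 := fun θ hθ => (zero_lt_two.trans_le hθ).ne'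
  unfold oneSubSqrt
  exact continuousOn_const.sub
    ((continuousOn_const.sub (continuousOn_const.div continuousOn_id hne)).sqrt)

-- `θ (1 - s²) = 2` for `s = √(1 - 2/θ)`, so `θ/2 · (1 + s) = 1/(1 - s)`.
lemma g_eq_of_two_le {θ : ℝ} (hθ : 2 ≤ θ) :
    g θ = (oneSubSqrt θ)⁻¹ + log (oneSubSqrt θ) - 1 / 2 - log 2 := by
  have hu := (oneSubSqrt_mem_Ioc hθ).1
  have hsq : √(1 - 2 / θ) ^ 2 = 1 - 2 / θ := sq_sqrt (one_sub_two_div_mem_Ico hθ).1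
  unfold oneSubSqrt at *
  set s := √(1 - 2 / θ)
  have hlog : log (1 / 2 - 1 / 2 * s) = log (1 - s) - log 2 := by
    rw [← log_div hu.ne' two_ne_zero]; ring_nf
  have hkey : θ / 2 + θ / 2 * s = (1 - s)⁻¹ := by
    refine eq_inv_of_mul_eq_one_left ?_
    have hθs : θ * s ^ 2 = θ - 2 := by rw [hsq]; field_simp
    linear_combination -hθs / 2
  rw [g, hlog, ← hkey]
  ring

lemma strictMonoOn_g : StrictMonoOn g (Ici 2) := by
  have h := strictAntiOn_inv_add_log.comp strictAntiOn_oneSubSqrt fun _ => oneSubSqrt_mem_Ioc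
  refine (h.add_const (-(1 / 2) - log 2)).congr fun θ hθ => ?_
  simp only [Function.comp_apply, g_eq_of_two_le hθ]
  ring

lemma continuousOn_g : ContinuousOn g (Ici 2) := by
  have hne : ∀ θ ∈ Ici (2 : ℝ), oneSubSqrt θ ≠ 0 :=
    fun θ hθ => (oneSubSqrt_mem_Ioc hθ).1.ne'
  have h := (((continuousOn_oneSubSqrt.inv₀ hne).add (continuousOn_oneSubSqrt.log hne)).sub
    (continuousOn_const (c := 1 / 2))).sub (continuousOn_const (c := log 2))
  exact h.congr fun θ hθ => g_eq_of_two_le hθ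

lemma g_two_neg : g 2 < 0 := by
  have : oneSubSqrt 2 = 1 := by norm_num [oneSubSqrt]
  rw [g_eq_of_two_le le_rfl, this]
  norm_num
  linarith [log_two_gt_d9]

lemma g_three_pos : 0 < g 3 := by
  have hu := oneSubSqrt_mem_Ioc (θ := 3) (by norm_num)
  have hhalf : oneSubSqrt 3 < 2⁻¹ := by
    rw [oneSubSqrt, sub_lt_comm, lt_sqrt (by norm_num)]
    norm_num
  have := strictAntiOn_inv_add_log hu (by norm_num) hhalf
  rw [g_eq_of_two_le (by norm_num)]
  simp only [inv_inv, log_inv] at this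
  linarith [log_two_lt_d9]

theorem g_has_unique_zero :
    g 2 < 0 ∧ g 3 > 0 ∧ ∃! θc : ℝ, θc ∈ Set.Ici (2 : ℝ) ∧ g θc = 0 := by
  refine ⟨g_two_neg, g_three_pos, ?_⟩
  obtain ⟨θc, hθc, hzero⟩ := intermediate_value_Icc (by norm_num : (2 : ℝ) ≤ 3)
    (continuousOn_g.mono Icc_subset_Ici_self) ⟨g_two_neg.le, g_three_pos.le⟩
  exact ⟨θc, ⟨hθc.1, hzero⟩, fun θ ⟨hθ, hθzero⟩ =>
    strictMonoOn_g.injOn hθ hθc.1 (hθzero.trans hzero.symm)⟩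
end
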